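/- Transparency relational lemma for bind: fix an observer label ℓ* : L. For relations Aᵣ : A₀ → A₁ → Prop and Bᵣ : B₀ → B₁ → Prop, suppose o : Option A₀ and f : Fac A₁ satisfy R_{Aᵣ} o f, and the continuations c₀ : A₀ → Option B₀ and c₁ : A₁ → Fac B₁ satisfy: for all a₀ : A₀ and a₁ : A₁ with Aᵣ a₀ a₁, R_{Bᵣ} (c₀ a₀) (c₁ a₁). Then R_{Bᵣ} (Option.bind o c₀) (bind f c₁). -/
import Mathlib


/-- Faceted values over labels `L` and payload type `A`. -/
inductive Fac (L : Type*) (A : Type*) where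
  | ret : A → Fac L A
  | facet : L → Fac L A → Fac L A → Fac L A

section
variable {L : Type*} [PartialOrder L] [DecidableRel ((· ≤ ·) : L → L → Prop)]

/-- Projection of a faceted value at an observer level. -/
def Fac.project {A : Type*} (ℓ : L) : Fac L A → A
  | .ret a => a
  | .facet ℓ' f₀ f₁ => if ℓ' ≤ ℓ then f₀.project ℓ else f₁.project ℓ

/-- Monadic bind for faceted values. -/
def Fac.bind {A B : Type*} : Fac L A → (A → Fac L B) → Fac L B
  | .ret a, c => c a
  | .facet ℓ' f₀ f₁, c => .facet ℓ' (f₀.bind c) (f₁.bind c)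

/-- `ℓ`-equivalence of faceted values. -/
def FacEquiv {A : Type*} (ℓ : L) (f₀ f₁ : Fac L A) : Prop :=
  f₀.project ℓ = f₁.project ℓ

/-- The standard-to-faceted relation at observer level ℓstar: the standard
(option) result, if defined, is related to the projection of the faceted
result. -/
def StdRel {A₀ A₁ : Type*} (ℓstar : L) (Ar : A₀ → A₁ → Prop)
    (o : Option A₀) (f : Fac L A₁) : Prop :=
  o ≠ none → ∃ a₀, o = some a₀ ∧ Ar a₀ (f.project ℓstar)


theorem Fac.project_bind {A B : Type*} (ℓ : L) (f : Fac L A) (c : A → Fac L B) :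
    (f.bind c).project ℓ = (c (f.project ℓ)).project ℓ := by
  induction f with
  | ret a => rfl
  | facet ℓ' f₀ f₁ ih₀ ih₁ =>
    simp only [Fac.bind, Fac.project]
    split <;> simp [ih₀, ih₁]

/-- Transparency relational lemma for bind. -/
theorem stdRel_bind {A₀ A₁ B₀ B₁ : Type*} (ℓstar : L)
    (Ar : A₀ → A₁ → Prop) (Br : B₀ → B₁ → Prop)
    (o : Option A₀) (f : Fac L A₁) (ho : StdRel ℓstar Ar o f)
    (c₀ : A₀ → Option B₀) (c₁ : A₁ → Fac L B₁)
    (hc : ∀ a₀ a₁, Ar a₀ a₁ → StdRel ℓstar Br (c₀ a₀) (c₁ a₁)) :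
    StdRel ℓstar Br (o.bind c₀) (f.bind c₁) := by
  intro hne
  cases o with
  | none => simp at hne
  | some a₀ =>
    obtain ⟨a₀', he, har⟩ := ho (by simp)
    obtain rfl : a₀' = a₀ := by injection he.symm
    rw [show (some a₀').bind c₀ = c₀ a₀' from rfl] at hne ⊢
    obtain ⟨b₀, hb, hbr⟩ := hc a₀' _ har hne
    exact ⟨b₀, hb, by rwa [Fac.project_bind]⟩

end
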